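/- For any finite multiset V of points in ℝ^2 there exist three lines ℓ1, ℓ2, ℓ3, each balanced with respect to V, passing through a common point, such that the smaller angle between any two of them equals π/3. -/

import Mathlib

open scoped Classical

open Multiset Real

-- ## Auxiliary counting lemmas

lemma countP_mono' {α : Type*} (S : Multiset α) {p q : α → Prop} (h : ∀ x ∈ S, p x → q x) :
    S.countP p ≤ S.countP q := by
  induction S using Multiset.induction_on with
  | empty => simp
  | cons a s ih =>
    rw [countP_cons, countP_cons]
    have h1 := h a (mem_cons_self a s)
    have h2 := ih (fun x hx => h x (mem_cons_of_mem hx))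
    by_cases hp : p a
    · simp [hp, h1 hp]; omega
    · simp [hp]; split_ifs <;> omega

lemma countP_add_le {α : Type*} (S : Multiset α) {p q : α → Prop}
    (h : ∀ x ∈ S, p x → q x → False) :
    S.countP p + S.countP q ≤ S.card := by
  induction S using Multiset.induction_on with
  | empty => simp
  | cons a s ih =>
    rw [countP_cons, countP_cons, card_cons]
    have h2 := ih (fun x hx => h x (mem_cons_of_mem hx))
    by_cases hp : p a
    · by_cases hq : q a
      · exact absurd hq (fun hq => h a (mem_cons_self a s) hp hq)
      · simp [hp, hq]; omega
    · simp [hp]; split_ifs <;> omega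

-- ## Order statistics of a multiset of reals

noncomputable def mnth (S : Multiset ℝ) (k : ℕ) : ℝ := (S.sort (· ≤ ·)).getD (k-1) 0

lemma mnth_count_le (S : Multiset ℝ) {k : ℕ} (h1 : 1 ≤ k) (h2 : k ≤ S.card) :
    k ≤ S.countP (fun x => x ≤ mnth S k) := by
  set L := S.sort (· ≤ ·) with hL
  have hlen : L.length = S.card := S.length_sort _
  have hsorted : L.Pairwise (· ≤ ·) := S.pairwise_sort _
  have hk1 : k - 1 < L.length := by omega
  have hval : mnth S k = L[k-1] := List.getD_eq_getElem _ _ hk1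
  have hmemdrop : L[k-1] ∈ L.drop (k-1) := by
    rw [List.drop_eq_getElem_cons hk1]; exact List.mem_cons_self
  have hsplit : (↑(L.take (k-1)) + ↑(L.drop (k-1)) : Multiset ℝ) = S := by
    rw [Multiset.coe_add, List.take_append_drop]; exact S.sort_eq _
  have hc : S.countP (fun x => x ≤ mnth S k)
      = countP (fun x => x ≤ mnth S k) (↑(L.take (k-1)))
        + countP (fun x => x ≤ mnth S k) (↑(L.drop (k-1))) := by
    rw [← countP_add, hsplit]
  have htake : countP (fun x => x ≤ mnth S k) (↑(L.take (k-1))) = k - 1 := by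
    rw [Multiset.countP_eq_card.mpr, Multiset.coe_card, List.length_take]
    · omega
    · intro x hx
      rw [Multiset.mem_coe] at hx
      rw [hval]
      exact hsorted.rel_of_mem_take_of_mem_drop hx hmemdrop
  have hdrop : 0 < countP (fun x => x ≤ mnth S k) (↑(L.drop (k-1))) :=
    Multiset.countP_pos.mpr ⟨L[k-1], Multiset.mem_coe.mpr hmemdrop, by rw [hval]⟩
  omega

lemma mnth_count_ge (S : Multiset ℝ) {k : ℕ} (h1 : 1 ≤ k) (h2 : k ≤ S.card) :
    S.card + 1 ≤ S.countP (fun x => mnth S k ≤ x) + k := by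
  set L := S.sort (· ≤ ·) with hL
  have hlen : L.length = S.card := S.length_sort _
  have hsorted : L.Pairwise (· ≤ ·) := S.pairwise_sort _
  have hk1 : k - 1 < L.length := by omega
  have hval : mnth S k = L[k-1] := List.getD_eq_getElem _ _ hk1
  have hmemtake : L[k-1] ∈ L.take k :=
    List.mem_take_iff_getElem.mpr ⟨k-1, by omega, rfl⟩
  have hsplit : (↑(L.take k) + ↑(L.drop k) : Multiset ℝ) = S := by
    rw [Multiset.coe_add, List.take_append_drop]; exact S.sort_eq _
  have hc : S.countP (fun x => mnth S k ≤ x)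
      = countP (fun x => mnth S k ≤ x) (↑(L.take k))
        + countP (fun x => mnth S k ≤ x) (↑(L.drop k)) := by
    rw [← countP_add, hsplit]
  have hdrop : countP (fun x => mnth S k ≤ x) (↑(L.drop k)) = S.card - k := by
    rw [Multiset.countP_eq_card.mpr, Multiset.coe_card, List.length_drop]
    · omega
    · intro x hx
      rw [Multiset.mem_coe] at hx
      rw [hval]
      exact hsorted.rel_of_mem_take_of_mem_drop hmemtake hx
  have htake : 0 < countP (fun x => mnth S k ≤ x) (↑(L.take k)) :=
    Multiset.countP_pos.mpr ⟨L[k-1], Multiset.mem_coe.mpr hmemtake, by rw [hval]⟩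
  omega

lemma le_of_counts {S : Multiset ℝ} {k : ℕ} {t t' : ℝ}
    (h1 : k ≤ S.countP (fun x => x ≤ t))
    (h2 : S.card + 1 ≤ S.countP (fun x => t' ≤ x) + k) : t' ≤ t := by
  by_contra hc
  push_neg at hc
  have := countP_add_le S (p := fun x => x ≤ t) (q := fun x => t' ≤ x)
    (fun x _ hx hx' => by linarith)
  omega

lemma mnth_le_of_count {S : Multiset ℝ} {k : ℕ} {t : ℝ} (h1 : 1 ≤ k) (h2 : k ≤ S.card)
    (h : k ≤ S.countP (fun x => x ≤ t)) : mnth S k ≤ t :=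
  le_of_counts h (mnth_count_ge S h1 h2)

lemma le_mnth_of_count {S : Multiset ℝ} {k : ℕ} {t : ℝ} (h1 : 1 ≤ k) (h2 : k ≤ S.card)
    (h : S.card + 1 ≤ S.countP (fun x => t ≤ x) + k) : t ≤ mnth S k :=
  le_of_counts (mnth_count_le S h1 h2) h

lemma mnth_unique {S : Multiset ℝ} {k : ℕ} {t : ℝ} (h1 : 1 ≤ k) (h2 : k ≤ S.card)
    (h3 : k ≤ S.countP (fun x => x ≤ t))
    (h4 : S.card + 1 ≤ S.countP (fun x => t ≤ x) + k) : mnth S k = t :=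
  le_antisymm (mnth_le_of_count h1 h2 h3) (le_mnth_of_count h1 h2 h4)

lemma mnth_mono {S : Multiset ℝ} {k k' : ℕ} (h : k ≤ k') (h1 : 1 ≤ k) (h2 : k' ≤ S.card) :
    mnth S k ≤ mnth S k' :=
  le_of_counts (le_trans h (mnth_count_le S (by omega) h2)) (mnth_count_ge S h1 (le_trans h h2))

lemma mnth_neg (S : Multiset ℝ) {k : ℕ} (h1 : 1 ≤ k) (h2 : k ≤ S.card) :
    mnth (S.map (fun x => -x)) k = - mnth S (S.card + 1 - k) := by
  set k' := S.card + 1 - k with hk'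
  have hk'1 : 1 ≤ k' := by omega
  have hk'2 : k' ≤ S.card := by omega
  have hcard : (S.map (fun x => -x)).card = S.card := by simp
  apply mnth_unique h1 (by rw [hcard]; exact h2)
  · have : (S.map fun x => -x).countP (fun x => x ≤ -mnth S k')
        = S.countP (fun x => mnth S k' ≤ x) := by
      rw [Multiset.countP_map, ← Multiset.countP_eq_card_filter]
      apply Multiset.countP_congr rfl
      intro x _
      rw [eq_iff_iff]
      constructor <;> intro h <;> linarith
    rw [this]
    have := mnth_count_ge S hk'1 hk'2
    omega
  · have : (S.map fun x => -x).countP (fun x => -mnth S k' ≤ x)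
        = S.countP (fun x => x ≤ mnth S k') := by
      rw [Multiset.countP_map, ← Multiset.countP_eq_card_filter]
      apply Multiset.countP_congr rfl
      intro x _
      rw [eq_iff_iff]
      constructor <;> intro h <;> linarith
    rw [this, hcard]
    have := mnth_count_le S hk'1 hk'2
    omega

abbrev Pt := EuclideanSpace ℝ (Fin 2)

noncomputable def projS (V : Multiset Pt) (u : Pt) : Multiset ℝ :=
  V.map (fun v => (inner ℝ v u : ℝ))

noncomputable def med (V : Multiset Pt) (u : Pt) : ℝ :=
  (mnth (projS V u) ((V.card + 1)/2) + mnth (projS V u) (V.card/2 + 1)) / 2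

lemma projS_card (V : Multiset Pt) (u : Pt) : (projS V u).card = V.card := by
  simp [projS]

lemma countP_projS (V : Multiset Pt) (u : Pt) (p : ℝ → Prop) :
    (projS V u).countP p = V.countP (fun v => p (inner ℝ v u)) := by
  rw [projS, Multiset.countP_map, ← Multiset.countP_eq_card_filter]

lemma med_mem (V : Multiset Pt) (u : Pt) (hN : 1 ≤ V.card) :
    mnth (projS V u) ((V.card + 1)/2) ≤ med V u ∧
      med V u ≤ mnth (projS V u) (V.card/2 + 1) := by
  have h := mnth_mono (S := projS V u) (k := (V.card + 1)/2) (k' := V.card/2 + 1)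
    (by omega) (by omega) (by rw [projS_card]; omega)
  constructor <;> (rw [med]; linarith)

lemma balance_lt (V : Multiset Pt) (u : Pt) :
    V.countP (fun v => (inner ℝ v u : ℝ) < med V u) ≤ V.card / 2 := by
  rcases Nat.eq_zero_or_pos V.card with h0 | hN
  · rw [Multiset.card_eq_zero] at h0
    subst h0; simp
  set S := projS V u with hS
  set b := mnth S (V.card/2 + 1) with hb
  have hmb : med V u ≤ b := (med_mem V u hN).2
  have e1 : V.countP (fun v => (inner ℝ v u : ℝ) < med V u)
      = S.countP (fun x => x < med V u) := by rw [hS, countP_projS]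
  have e2 : S.countP (fun x => x < med V u) ≤ S.countP (fun x => x < b) :=
    countP_mono' S (fun x _ hx => lt_of_lt_of_le hx hmb)
  have e3 : S.countP (fun x => x < b) + S.countP (fun x => b ≤ x) ≤ S.card :=
    countP_add_le S (fun x _ hx hx' => absurd hx (not_lt.mpr hx'))
  have e4 : S.card + 1 ≤ S.countP (fun x => b ≤ x) + (V.card/2 + 1) :=
    mnth_count_ge S (k := V.card/2 + 1) (by omega) (by rw [hS, projS_card]; omega)
  have e5 : S.card = V.card := by rw [hS, projS_card]
  omega

lemma balance_gt (V : Multiset Pt) (u : Pt) :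
    V.countP (fun v => med V u < (inner ℝ v u : ℝ)) ≤ V.card / 2 := by
  rcases Nat.eq_zero_or_pos V.card with h0 | hN
  · rw [Multiset.card_eq_zero] at h0
    subst h0; simp
  set S := projS V u with hS
  set a := mnth S ((V.card + 1)/2) with ha
  have hma : a ≤ med V u := (med_mem V u hN).1
  have e1 : V.countP (fun v => med V u < (inner ℝ v u : ℝ))
      = S.countP (fun x => med V u < x) := by rw [hS, countP_projS]
  have e2 : S.countP (fun x => med V u < x) ≤ S.countP (fun x => a < x) :=
    countP_mono' S (fun x _ hx => lt_of_le_of_lt hma hx)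
  have e3 : S.countP (fun x => a < x) + S.countP (fun x => x ≤ a) ≤ S.card :=
    countP_add_le S (fun x _ hx hx' => absurd hx (not_lt.mpr hx'))
  have e4 : (V.card + 1)/2 ≤ S.countP (fun x => x ≤ a) :=
    mnth_count_le S (k := (V.card + 1)/2) (by omega) (by rw [hS, projS_card]; omega)
  have e5 : S.card = V.card := by rw [hS, projS_card]
  omega

lemma med_neg (V : Multiset Pt) (u : Pt) : med V (-u) = - med V u := by
  rcases Nat.eq_zero_or_pos V.card with h0 | hN
  · rw [Multiset.card_eq_zero] at h0
    subst h0
    simp [med, mnth, projS]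
  have hproj : projS V (-u) = (projS V u).map (fun x => -x) := by
    rw [projS, projS, Multiset.map_map]
    congr 1
    funext v
    simp [inner_neg_right]
  have hc : (projS V u).card = V.card := projS_card V u
  rw [med, med, hproj]
  rw [mnth_neg _ (by omega) (by omega), mnth_neg _ (by omega) (by omega)]
  rw [hc]
  have e1 : V.card + 1 - (V.card + 1)/2 = V.card/2 + 1 := by omega
  have e2 : V.card + 1 - (V.card/2 + 1) = (V.card + 1)/2 := by omega
  rw [e1, e2]
  ring

noncomputable def rad (V : Multiset Pt) : ℝ := (V.map (fun v => ‖v‖)).sum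

lemma rad_nonneg (V : Multiset Pt) : 0 ≤ rad V := by
  apply Multiset.sum_nonneg
  intro x hx
  rcases Multiset.mem_map.mp hx with ⟨v, _, rfl⟩
  exact norm_nonneg v

lemma norm_le_rad (V : Multiset Pt) {v : Pt} (hv : v ∈ V) : ‖v‖ ≤ rad V := by
  apply Multiset.single_le_sum _ _ (Multiset.mem_map_of_mem _ hv)
  intro x hx
  rcases Multiset.mem_map.mp hx with ⟨w, _, rfl⟩
  exact norm_nonneg w

lemma inner_shift (V : Multiset Pt) {v : Pt} (hv : v ∈ V) (u u' : Pt) :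
    |(inner ℝ v u : ℝ) - inner ℝ v u'| ≤ rad V * ‖u - u'‖ := by
  have h1 : (inner ℝ v u : ℝ) - inner ℝ v u' = inner ℝ v (u - u') := (inner_sub_right v u u').symm
  rw [h1]
  calc |(inner ℝ v (u - u') : ℝ)| ≤ ‖v‖ * ‖u - u'‖ := abs_real_inner_le_norm v (u - u')
    _ ≤ rad V * ‖u - u'‖ :=
      mul_le_mul_of_nonneg_right (norm_le_rad V hv) (norm_nonneg _)

lemma mnth_proj_lip (V : Multiset Pt) {k : ℕ} (h1 : 1 ≤ k) (h2 : k ≤ V.card) (u u' : Pt) :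
    mnth (projS V u) k ≤ mnth (projS V u') k + rad V * ‖u - u'‖ := by
  set t := mnth (projS V u') k with ht
  set δ := rad V * ‖u - u'‖ with hδ
  apply mnth_le_of_count h1 (by rw [projS_card]; exact h2)
  rw [countP_projS]
  have hcount : k ≤ V.countP (fun v => (inner ℝ v u' : ℝ) ≤ t) := by
    have := mnth_count_le (projS V u') h1 (by rw [projS_card]; exact h2)
    rwa [countP_projS] at this
  refine le_trans hcount (countP_mono' V ?_)
  intro v hv hle
  have := inner_shift V hv u u'
  have h3 : (inner ℝ v u : ℝ) - inner ℝ v u' ≤ δ := le_trans (le_abs_self _) this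
  linarith

lemma abs_mnth_proj_lip (V : Multiset Pt) {k : ℕ} (h1 : 1 ≤ k) (h2 : k ≤ V.card) (u u' : Pt) :
    |mnth (projS V u) k - mnth (projS V u') k| ≤ rad V * ‖u - u'‖ := by
  rw [abs_sub_le_iff]
  constructor
  · have := mnth_proj_lip V h1 h2 u u'
    linarith
  · have := mnth_proj_lip V h1 h2 u' u
    rw [norm_sub_rev] at this
    linarith

lemma med_lip (V : Multiset Pt) (u u' : Pt) :
    |med V u - med V u'| ≤ rad V * ‖u - u'‖ := by
  rcases Nat.eq_zero_or_pos V.card with h0 | hN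
  · rw [Multiset.card_eq_zero] at h0
    subst h0
    simp [med, mnth, projS, rad]
  have h1 := abs_mnth_proj_lip V (k := (V.card+1)/2) (by omega) (by omega) u u'
  have h2 := abs_mnth_proj_lip V (k := V.card/2 + 1) (by omega) (by omega) u u'
  rw [abs_sub_le_iff] at h1 h2 ⊢
  rw [med, med]
  constructor <;> [linarith [h1.1, h2.1]; linarith [h1.2, h2.2]]

lemma med_cont (V : Multiset Pt) : Continuous (med V) := by
  have hR : 0 ≤ rad V := rad_nonneg V
  have : LipschitzWith (rad V).toNNReal (med V) := by
    apply LipschitzWith.of_dist_le_mul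
    intro x y
    rw [Real.dist_eq, dist_eq_norm, Real.coe_toNNReal _ hR]
    exact med_lip V x y
  exact this.continuous

noncomputable def dir (θ : ℝ) : Pt := !₂[Real.cos θ, Real.sin θ]

lemma dir_cont : Continuous dir := by
  apply Continuous.comp (PiLp.continuous_toLp 2 (fun _ : Fin 2 => ℝ))
  apply continuous_pi
  intro i
  fin_cases i
  · exact Real.continuous_cos
  · exact Real.continuous_sin

lemma dir_norm (θ : ℝ) : ‖dir θ‖ = 1 := by
  rw [EuclideanSpace.norm_eq]
  simp [dir, Fin.sum_univ_two]

lemma dir_inner (a b : ℝ) : (inner ℝ (dir a) (dir b) : ℝ) = Real.cos (a - b) := by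
  rw [Real.cos_sub]
  simp [dir, PiLp.inner_apply, Fin.sum_univ_two]; ring

lemma dir_add_pi (θ : ℝ) : dir (θ + π) = - dir θ := by
  ext i
  fin_cases i <;> simp [dir, Real.cos_add_pi, Real.sin_add_pi]

lemma cos23 : Real.cos (2*(π/3)) = -(1/2) := by
  rw [show 2*(π/3) = π - π/3 by ring, Real.cos_pi_sub, Real.cos_pi_div_three]

lemma sin23 : Real.sin (2*(π/3)) = Real.sqrt 3 / 2 := by
  rw [show 2*(π/3) = π - π/3 by ring, Real.sin_pi_sub, Real.sin_pi_div_three]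

lemma dir_sub_eq (θ : ℝ) : dir (θ + 2*(π/3)) = dir (θ + π/3) - dir θ := by
  ext i
  fin_cases i <;>
    simp [dir, Real.cos_add, Real.sin_add, cos23, sin23,
      Real.cos_pi_div_three, Real.sin_pi_div_three] <;> ring

/-- For any finite multiset `V` of points in ℝ² there exist three concurrent balanced lines
pairwise making angle `π/3`: a common point `p` and unit normals `n i` with
`|⟪n i, n j⟫| = 1/2` for `i ≠ j`, such that each open half-plane bounded by each line contains
at most `|V|/2` points of `V`. -/
theorem exists_three_concurrent_balanced_lines
    (V : Multiset (EuclideanSpace ℝ (Fin 2))) :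
    ∃ (p : EuclideanSpace ℝ (Fin 2)) (n : Fin 3 → EuclideanSpace ℝ (Fin 2)),
      (∀ i, ‖n i‖ = 1) ∧
      (∀ i j, i ≠ j → |(inner ℝ (n i) (n j) : ℝ)| = 1 / 2) ∧
      (∀ i,
        (V.countP (fun v => (inner ℝ (v - p) (n i) : ℝ) < 0) : ℝ) ≤ (V.card : ℝ) / 2 ∧
        (V.countP (fun v => 0 < (inner ℝ (v - p) (n i) : ℝ)) : ℝ) ≤ (V.card : ℝ) / 2) := by
  -- the continuous function measuring failure of concurrency
  set g : ℝ → ℝ := fun θ => med V (dir θ) with hg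
  have hgc : Continuous g := (med_cont V).comp dir_cont
  set f : ℝ → ℝ := fun θ => g (θ + π/3) - g θ - g (θ + 2*(π/3)) with hf
  have hfc : Continuous f := by
    apply Continuous.sub
    apply Continuous.sub
    · exact hgc.comp (by continuity)
    · exact hgc
    · exact hgc.comp (by continuity)
  have hanti : f (π/3) = - f 0 := by
    have e1 : π/3 + π/3 = 0 + 2*(π/3) := by ring
    have e2 : π/3 + 2*(π/3) = 0 + π := by ring
    have e3 : g (0 + π) = - g 0 := by
      rw [hg]
      simp only []
      rw [dir_add_pi, med_neg]
    rw [hf]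
    simp only []
    rw [e1, e2, e3]
    ring_nf
  -- IVT
  obtain ⟨θ₀, hθ₀mem, hθ₀⟩ : ∃ θ₀ ∈ Set.uIcc 0 (π/3), f θ₀ = 0 := by
    have h := intermediate_value_uIcc (a := 0) (b := π/3) (f := f) hfc.continuousOn
    have h0 : (0:ℝ) ∈ Set.uIcc (f 0) (f (π/3)) := by
      rw [hanti]
      rcases le_or_gt 0 (f 0) with h' | h'
      · exact Set.mem_uIcc.mpr (Or.inr ⟨by linarith, h'⟩)
      · exact Set.mem_uIcc.mpr (Or.inl ⟨by linarith, by linarith⟩)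
    rcases h h0 with ⟨θ₀, hm, hv⟩
    exact ⟨θ₀, hm, hv⟩
  clear hθ₀mem
  set α := θ₀ with hα
  set β := θ₀ + π/3 with hβ
  set γ := θ₀ + 2*(π/3) with hγ
  set m1 := g α with hm1
  set m2 := g β with hm2
  set m3 := g γ with hm3
  have hconc : m2 - m1 - m3 = 0 := hθ₀
  set c1 := Real.cos α with hc1
  set s1 := Real.sin α with hs1
  set c2 := Real.cos β with hc2
  set s2 := Real.sin β with hs2
  have hd : s2 * c1 - c2 * s1 = Real.sqrt 3 / 2 := by
    have := Real.sin_sub β α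
    rw [show β - α = π/3 by rw [hβ]; ring] at this
    rw [Real.sin_pi_div_three] at this
    rw [hc1, hs1, hc2, hs2]
    linarith
  have hdne : Real.sqrt 3 / 2 ≠ 0 := by positivity
  set p : Pt := !₂[(m1*s2 - m2*s1)/(Real.sqrt 3/2), (m2*c1 - m1*c2)/(Real.sqrt 3/2)] with hp
  have hp1 : (inner ℝ p (dir α) : ℝ) = m1 := by
    simp [hp, dir, PiLp.inner_apply, Fin.sum_univ_two, ← hc1, ← hs1]
    field_simp
    linear_combination 2 * m1 * hd
  have hp2 : (inner ℝ p (dir β) : ℝ) = m2 := by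
    simp [hp, dir, PiLp.inner_apply, Fin.sum_univ_two, ← hc2, ← hs2]
    field_simp
    linear_combination 2 * m2 * hd
  have hp3 : (inner ℝ p (dir γ) : ℝ) = m3 := by
    rw [hγ, dir_sub_eq, inner_sub_right, hp2]
    rw [show dir θ₀ = dir α from rfl, hp1]
    linarith
  refine ⟨p, ![dir α, dir β, dir γ], ?_, ?_, ?_⟩
  · intro i
    fin_cases i <;> simp <;> exact dir_norm _
  · intro i j hij
    have c13 : |Real.cos (π/3)| = 1/2 := by rw [Real.cos_pi_div_three]; norm_num
    have c23 : |Real.cos (2*(π/3))| = 1/2 := by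
      rw [show 2*(π/3) = π - π/3 by ring, Real.cos_pi_sub, Real.cos_pi_div_three]; norm_num
    fin_cases i <;> fin_cases j
    · exact absurd rfl hij
    · show |(inner ℝ (dir α) (dir β) : ℝ)| = 1/2
      rw [dir_inner, show α - β = -(π/3) by rw [hβ]; ring, Real.cos_neg]; exact c13
    · show |(inner ℝ (dir α) (dir γ) : ℝ)| = 1/2
      rw [dir_inner, show α - γ = -(2*(π/3)) by rw [hγ]; ring, Real.cos_neg]; exact c23
    · show |(inner ℝ (dir β) (dir α) : ℝ)| = 1/2
      rw [dir_inner, show β - α = π/3 by rw [hβ]; ring]; exact c13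
    · exact absurd rfl hij
    · show |(inner ℝ (dir β) (dir γ) : ℝ)| = 1/2
      rw [dir_inner, show β - γ = -(π/3) by rw [hβ, hγ]; ring, Real.cos_neg]; exact c13
    · show |(inner ℝ (dir γ) (dir α) : ℝ)| = 1/2
      rw [dir_inner, show γ - α = 2*(π/3) by rw [hγ]; ring]; exact c23
    · show |(inner ℝ (dir γ) (dir β) : ℝ)| = 1/2
      rw [dir_inner, show γ - β = π/3 by rw [hβ, hγ]; ring]; exact c13
    · exact absurd rfl hij
  · intro i
    have key : ∀ (θ : ℝ), (inner ℝ p (dir θ) : ℝ) = g θ →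
        (V.countP (fun v => (inner ℝ (v - p) (dir θ) : ℝ) < 0) : ℝ) ≤ (V.card : ℝ) / 2 ∧
        (V.countP (fun v => 0 < (inner ℝ (v - p) (dir θ) : ℝ)) : ℝ) ≤ (V.card : ℝ) / 2 := by
      intro θ hpθ
      have e1 : V.countP (fun v => (inner ℝ (v - p) (dir θ) : ℝ) < 0)
          = V.countP (fun v => (inner ℝ v (dir θ) : ℝ) < med V (dir θ)) := by
        apply Multiset.countP_congr rfl
        intro v _
        rw [eq_iff_iff, inner_sub_left, sub_neg, hpθ]
      have e2 : V.countP (fun v => 0 < (inner ℝ (v - p) (dir θ) : ℝ))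
          = V.countP (fun v => med V (dir θ) < (inner ℝ v (dir θ) : ℝ)) := by
        apply Multiset.countP_congr rfl
        intro v _
        rw [eq_iff_iff, inner_sub_left, sub_pos, hpθ]
      constructor
      · rw [e1]
        calc (V.countP _ : ℝ) ≤ ((V.card / 2 : ℕ) : ℝ) := Nat.cast_le.mpr (balance_lt V _)
          _ ≤ (V.card : ℝ) / 2 := Nat.cast_div_le
      · rw [e2]
        calc (V.countP _ : ℝ) ≤ ((V.card / 2 : ℕ) : ℝ) := Nat.cast_le.mpr (balance_gt V _)
          _ ≤ (V.card : ℝ) / 2 := Nat.cast_div_le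
    fin_cases i
    · convert key α hp1 <;> rfl
    · convert key β hp2 <;> rfl
    · convert key γ hp3 <;> rfl
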